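/- With G_n as in the context: let n ≥ 4r be an integer, let S ⊆ {1,…,n}, and let H be the induced subgraph of G_n on S; assume H has at least one edge. Let u_1 = max{u ∈ S : there exists v ∈ S with u < v and u adjacent to v in G_n}, and let v_1 ∈ S be any vertex with u_1 < v_1 and u_1 adjacent to v_1 in G_n. Then the induced subgraph of G_n on the vertex set S \ ({v_1} ∪ {w ∈ S : w is adjacent to v_1 in G_n}) is cochordal. -/
import Mathlib


/-- Adjacency in the graph `G_n` of the chain. -/
def adjGraph (r n : ℤ) (E : Set (ℤ × ℤ)) (u v : ℤ) : Prop :=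
  (u < v ∧ ∃ e ∈ E, e.1 ≤ u ∧ u - e.1 ≤ v - e.2 ∧ v - e.2 ≤ n - r) ∨
  (v < u ∧ ∃ e ∈ E, e.1 ≤ v ∧ v - e.1 ≤ u - e.2 ∧ u - e.2 ≤ n - r)

/-- `a 0, a 1, …, a (m-1)` is an induced anticycle of length `m` in this
cyclic order. -/
def IsInducedAnticycle (A : ℤ → ℤ → Prop) (m : ℕ) (a : ℕ → ℤ) : Prop :=
  (∀ s, s < m → ∀ t, t < m → s ≠ t → a s ≠ a t) ∧
  (∀ t, t < m → ¬ A (a t) (a ((t + 1) % m))) ∧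
  (∀ s, s < m → ∀ t, t < m → s ≠ t → (s + 1) % m ≠ t → (t + 1) % m ≠ s →
    A (a s) (a t))

/-- A graph (given by its adjacency relation) is cochordal if it has no
induced anticycle of length `m` for any `m ≥ 4`. -/
def Cochordal (A : ℤ → ℤ → Prop) : Prop :=
  ∀ m : ℕ, 4 ≤ m → ∀ a : ℕ → ℤ, ¬ IsInducedAnticycle A m a

/-- unfolding lemma for `adjGraph`. -/
lemma adjGraph_def {r n : ℤ} {E : Set (ℤ × ℤ)} {x y : ℤ} :
    adjGraph r n E x y ↔
      ((x < y ∧ ∃ e, e ∈ E ∧ e.1 ≤ x ∧ x - e.1 ≤ y - e.2 ∧ y - e.2 ≤ n - r) ∨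
       (y < x ∧ ∃ e, e ∈ E ∧ e.1 ≤ y ∧ y - e.1 ≤ x - e.2 ∧ x - e.2 ≤ n - r)) :=
  Iff.rfl

lemma adjGraph_symm {r n : ℤ} {E : Set (ℤ × ℤ)} {x y : ℤ}
    (h : adjGraph r n E x y) : adjGraph r n E y x :=
  adjGraph_def.mpr (adjGraph_def.mp h).symm

/-- value of `a % m` when `a < 2*m`. -/
lemma natmod (a m : ℕ) (h1 : 0 < m) (h2 : a < 2 * m) :
    (a % m = a ∧ a < m) ∨ (a % m = a - m ∧ m ≤ a) := by
  rcases Nat.lt_or_ge a m with h | h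
  · exact Or.inl ⟨Nat.mod_eq_of_lt h, h⟩
  · refine Or.inr ⟨?_, h⟩
    rw [Nat.mod_eq_sub_mod h, Nat.mod_eq_of_lt (by omega)]

lemma modne (m s t : ℕ) (h0 : 0 < m) (hs : s < 2 * m) (h1 : s ≠ t)
    (h2 : s ≠ m + t) : s % m ≠ t := by
  rcases Nat.lt_or_ge s m with h | h
  · rw [Nat.mod_eq_of_lt h]; exact h1
  · rw [Nat.mod_eq_sub_mod h, Nat.mod_eq_of_lt (by omega)]; omega

/-- for `n ≥ 4r`, for any induced subgraph `H` of `G_n` on a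
vertex set `S ⊆ {1,…,n}` having at least one edge, if `u₁` is the largest
vertex of `S` that is the smaller endpoint of an edge of `H`, and `v₁ ∈ S`
is any neighbour of `u₁` with `u₁ < v₁`, then the induced subgraph of `G_n`
on `S \ N_H[v₁]` is cochordal. -/
theorem stmt10 (r : ℤ) (hr : 1 ≤ r) (E : Set (ℤ × ℤ)) (hE : E.Nonempty)
    (hEr : ∀ e ∈ E, 1 ≤ e.1 ∧ e.1 < e.2 ∧ e.2 ≤ r)
    (n : ℤ) (hn : 4 * r ≤ n)
    (S : Set ℤ) (hS : ∀ x ∈ S, 1 ≤ x ∧ x ≤ n)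
    (u1 v1 : ℤ) (hu1S : u1 ∈ S)
    (hu1max : ∀ u ∈ S, (∃ v ∈ S, u < v ∧ adjGraph r n E u v) → u ≤ u1)
    (hv1S : v1 ∈ S) (hlt : u1 < v1) (hadj : adjGraph r n E u1 v1) :
    Cochordal (fun x y =>
      (x ∈ S ∧ x ≠ v1 ∧ ¬ adjGraph r n E x v1) ∧
      (y ∈ S ∧ y ≠ v1 ∧ ¬ adjGraph r n E y v1) ∧
      adjGraph r n E x y) := by
  classical
  have hsym : ∀ x y : ℤ, ¬ adjGraph r n E x y → ¬ adjGraph r n E y x :=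
    fun x y hxy h => hxy (adjGraph_symm h)
  -- extract the witness for the edge (u1, v1)
  have hadj1 := (adjGraph_def.mp hadj).resolve_right (by rintro ⟨hbad, -⟩; omega)
  obtain ⟨-, ew, hewE, hewu1, hewmid, hewtop⟩ := hadj1
  obtain ⟨hi1, hij, hjr⟩ := hEr ew hewE
  have hjv1 : ew.2 ≤ v1 := by omega
  intro m hm a ha
  unfold IsInducedAnticycle at ha
  obtain ⟨hinj, hcons, hadjS⟩ := ha
  -- membership facts and a partner for every vertex of the anticycle
  have hboth : ∀ t, t < m →
      ((a t ∈ S ∧ a t ≠ v1 ∧ ¬ adjGraph r n E (a t) v1) ∧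
       ((t + 2) % m < m ∧ adjGraph r n E (a t) (a ((t + 2) % m)))) := by
    intro t ht
    have hlt2 : (t + 2) % m < m := Nat.mod_lt _ (by omega)
    have n1 := natmod (t + 1) m (by omega) (by omega)
    have n2 := natmod (t + 2) m (by omega) (by omega)
    have n3 := natmod (t + 3) m (by omega) (by omega)
    have c1 : t ≠ (t + 2) % m := by
      rcases n2 with ⟨h', h''⟩ | ⟨h', h''⟩ <;> rw [h'] <;> omega
    have c2 : (t + 1) % m ≠ (t + 2) % m := by
      rcases n1 with ⟨h', h''⟩ | ⟨h', h''⟩ <;> rcases n2 with ⟨k', k''⟩ | ⟨k', k''⟩ <;>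
        rw [h', k'] <;> omega
    have c3 : ((t + 2) % m + 1) % m ≠ t := by
      have e3 : t + 2 + 1 = t + 3 := by omega
      rw [Nat.mod_add_mod, e3]
      rcases n3 with ⟨h', h''⟩ | ⟨h', h''⟩ <;> rw [h'] <;> omega
    have h := hadjS t ht ((t + 2) % m) hlt2 c1 c2 c3
    exact ⟨h.1, hlt2, h.2.2⟩
  have hmemA : ∀ t, t < m → (a t ∈ S ∧ a t ≠ v1 ∧ ¬ adjGraph r n E (a t) v1) :=
    fun t ht => (hboth t ht).1
  have hnon : ∀ t, t < m → ¬ adjGraph r n E (a t) (a ((t + 1) % m)) := by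
    intro t ht had
    exact hcons t ht ⟨hmemA t ht, hmemA _ (Nat.mod_lt _ (by omega)), had⟩
  -- smaller endpoint of any edge of the anticycle is < ew.1
  have hsmallend : ∀ s t, s < m → t < m → a s < a t →
      adjGraph r n E (a s) (a t) → a s < ew.1 := by
    intro s t hs ht hlt' hA
    have hmax := hu1max (a s) (hmemA s hs).1 ⟨a t, (hmemA t ht).1, hlt', hA⟩
    by_contra hq
    push_neg at hq
    exact (hmemA s hs).2.2
      (adjGraph_def.mpr (Or.inl ⟨by omega, ew, hewE, by omega, by omega, hewtop⟩))
  by_cases hsplit : v1 ≤ n - r + 2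
  · -- CASE II : v1 is not too large
    -- classification: every anticycle vertex is small (< ew.1) or high (> v1)
    have hclass : ∀ t, t < m → a t < ew.1 ∨ v1 < a t := by
      intro t ht
      by_contra hq
      push_neg at hq
      obtain ⟨hq1, hq2⟩ := hq
      have hne := (hmemA t ht).2.1
      have ht2m := (hboth t ht).2.1
      have hA2 := (hboth t ht).2.2
      rcases adjGraph_def.mp hA2 with ⟨hlt2, e, heE, f1, f2, f3⟩ |
        ⟨hlt2, e, heE, f1, f2, f3⟩
      · have := hsmallend t ((t + 2) % m) ht ht2m hlt2
          (adjGraph_def.mpr (Or.inl ⟨hlt2, e, heE, f1, f2, f3⟩))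
        omega
      · have hs2 := hsmallend ((t + 2) % m) t ht2m ht hlt2
          (adjGraph_def.mpr (Or.inl ⟨hlt2, e, heE, f1, f2, f3⟩))
        obtain ⟨g1, g2, g3⟩ := hEr e heE
        exact (hmemA ((t + 2) % m) ht2m).2.2
          (adjGraph_def.mpr (Or.inl ⟨by omega, e, heE, f1, by omega, by omega⟩))
    -- every edge of the anticycle is mixed : one small, one high endpoint
    have hmixed : ∀ s t, s < m → t < m → adjGraph r n E (a s) (a t) →
        ((a s < ew.1 ∧ v1 < a t) ∨ (a t < ew.1 ∧ v1 < a s)) := by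
      intro s t hs ht hA
      rcases adjGraph_def.mp hA with ⟨hlt2, e, heE, f1, f2, f3⟩ |
        ⟨hlt2, e, heE, f1, f2, f3⟩
      · have hss := hsmallend s t hs ht hlt2
          (adjGraph_def.mpr (Or.inl ⟨hlt2, e, heE, f1, f2, f3⟩))
        obtain ⟨g1, g2, g3⟩ := hEr e heE
        rcases hclass t ht with hcl | hcl
        · exact absurd (adjGraph_def.mpr
            (Or.inl ⟨by omega, e, heE, f1, by omega, by omega⟩)) (hmemA s hs).2.2
        · exact Or.inl ⟨hss, hcl⟩
      · have hss := hsmallend t s ht hs hlt2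
          (adjGraph_def.mpr (Or.inl ⟨hlt2, e, heE, f1, f2, f3⟩))
        obtain ⟨g1, g2, g3⟩ := hEr e heE
        rcases hclass s hs with hcl | hcl
        · exact absurd (adjGraph_def.mpr
            (Or.inl ⟨by omega, e, heE, f1, by omega, by omega⟩)) (hmemA t ht).2.2
        · exact Or.inr ⟨hss, hcl⟩
    -- the key 4-vertex computation
    have key : ∀ pp qq pp' qq' : ℤ, pp < pp' → pp' < ew.1 → v1 < qq → v1 < qq' →
        adjGraph r n E pp qq → adjGraph r n E pp' qq' → ¬ adjGraph r n E pp' qq →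
        ¬ adjGraph r n E pp qq' → ¬ adjGraph r n E pp' v1 →
        ¬ adjGraph r n E qq' v1 → False := by
      intro pp qq pp' qq' k0 k1 k2 k3 kA kB kC kD kE kF
      have kA' := (adjGraph_def.mp kA).resolve_right (by rintro ⟨hbad, -⟩; omega)
      obtain ⟨-, e, heE, a1, a2, a3⟩ := kA'
      have kB' := (adjGraph_def.mp kB).resolve_right (by rintro ⟨hbad, -⟩; omega)
      obtain ⟨-, e', he'E, b1, b2, b3⟩ := kB'
      obtain ⟨g1, g2, g3⟩ := hEr e heE
      obtain ⟨g1', g2', g3'⟩ := hEr e' he'E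
      have w1 : v1 - e'.2 < pp' - e'.1 := by
        by_contra hcon
        push_neg at hcon
        exact kE (adjGraph_def.mpr
          (Or.inl ⟨by omega, e', he'E, b1, hcon, by omega⟩))
      have w2 : qq - e.2 < pp' - e.1 := by
        by_contra hcon
        push_neg at hcon
        exact kC (adjGraph_def.mpr
          (Or.inl ⟨by omega, e, heE, by omega, hcon, a3⟩))
      have w3 : qq - e'.2 < pp' - e'.1 := by
        by_contra hcon
        push_neg at hcon
        exact kC (adjGraph_def.mpr
          (Or.inl ⟨by omega, e', he'E, b1, hcon, by omega⟩))
      have w4 : n - r + e.2 < qq' := by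
        by_contra hcon
        push_neg at hcon
        exact kD (adjGraph_def.mpr
          (Or.inl ⟨by omega, e, heE, a1, by omega, by omega⟩))
      exact kF (adjGraph_def.mpr
        (Or.inr ⟨k3, e', he'E, by omega, by omega, b3⟩))
    rcases (by omega : m = 4 ∨ 5 ≤ m) with hm4 | hm5
    · -- m = 4
      subst hm4
      have adj02 : adjGraph r n E (a 0) (a 2) :=
        (hadjS 0 (by norm_num) 2 (by norm_num) (by norm_num) (by norm_num)
          (by norm_num)).2.2
      have adj13 : adjGraph r n E (a 1) (a 3) :=
        (hadjS 1 (by norm_num) 3 (by norm_num) (by norm_num) (by norm_num)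
          (by norm_num)).2.2
      have A02 := hmixed 0 2 (by norm_num) (by norm_num) adj02
      have A13 := hmixed 1 3 (by norm_num) (by norm_num) adj13
      have N01 : ¬ adjGraph r n E (a 0) (a 1) := by
        have hh := hnon 0 (by norm_num); norm_num at hh; exact hh
      have N12 : ¬ adjGraph r n E (a 1) (a 2) := by
        have hh := hnon 1 (by norm_num); norm_num at hh; exact hh
      have N23 : ¬ adjGraph r n E (a 2) (a 3) := by
        have hh := hnon 2 (by norm_num); norm_num at hh; exact hh
      have N30 : ¬ adjGraph r n E (a 3) (a 0) := by
        have hh := hnon 3 (by norm_num); norm_num at hh; exact hh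
      have M0 := hmemA 0 (by norm_num)
      have M1 := hmemA 1 (by norm_num)
      have M2 := hmemA 2 (by norm_num)
      have M3 := hmemA 3 (by norm_num)
      rcases A02 with ⟨u02a, u02b⟩ | ⟨u02a, u02b⟩ <;>
        rcases A13 with ⟨u13a, u13b⟩ | ⟨u13a, u13b⟩
      · rcases lt_trichotomy (a 0) (a 1) with hc | hc | hc
        · exact key (a 0) (a 2) (a 1) (a 3) hc u13a u02b u13b adj02 adj13 N12
            (hsym _ _ N30) M1.2.2 M3.2.2
        · exact hinj 0 (by norm_num) 1 (by norm_num) (by norm_num) hc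
        · exact key (a 1) (a 3) (a 0) (a 2) hc u02a u13b u02b adj13 adj02
            (hsym _ _ N30) N12 M0.2.2 M2.2.2
      · rcases lt_trichotomy (a 0) (a 3) with hc | hc | hc
        · exact key (a 0) (a 2) (a 3) (a 1) hc u13a u02b u13b adj02
            (adjGraph_symm adj13) (hsym _ _ N23) N01 M3.2.2 M1.2.2
        · exact hinj 0 (by norm_num) 3 (by norm_num) (by norm_num) hc
        · exact key (a 3) (a 1) (a 0) (a 2) hc u02a u13b u02b
            (adjGraph_symm adj13) adj02 N01 (hsym _ _ N23) M0.2.2 M2.2.2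
      · rcases lt_trichotomy (a 2) (a 1) with hc | hc | hc
        · exact key (a 2) (a 0) (a 1) (a 3) hc u13a u02b u13b
            (adjGraph_symm adj02) adj13 (hsym _ _ N01) N23 M1.2.2 M3.2.2
        · exact hinj 2 (by norm_num) 1 (by norm_num) (by norm_num) hc
        · exact key (a 1) (a 3) (a 2) (a 0) hc u02a u13b u02b adj13
            (adjGraph_symm adj02) N23 (hsym _ _ N01) M2.2.2 M0.2.2
      · rcases lt_trichotomy (a 2) (a 3) with hc | hc | hc
        · exact key (a 2) (a 0) (a 3) (a 1) hc u13a u02b u13b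
            (adjGraph_symm adj02) (adjGraph_symm adj13) N30 (hsym _ _ N12)
            M3.2.2 M1.2.2
        · exact hinj 2 (by norm_num) 3 (by norm_num) (by norm_num) hc
        · exact key (a 3) (a 1) (a 2) (a 0) hc u02a u13b u02b
            (adjGraph_symm adj13) (adjGraph_symm adj02) (hsym _ _ N12) N30
            M2.2.2 M0.2.2
    · -- m ≥ 5 : odd-cycle coloring contradiction
      have hmx : ∀ s t : ℕ, s < m → t < m → s ≠ t → (s + 1) % m ≠ t →
          (t + 1) % m ≠ s → ((a s < ew.1 ∧ v1 < a t) ∨ (a t < ew.1 ∧ v1 < a s)) :=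
        fun s t hs ht h1 h2 h3 => hmixed s t hs ht (hadjS s hs t ht h1 h2 h3).2.2
      have c02 := hmx 0 2 (by omega) (by omega) (by omega)
        (modne m (0 + 1) 2 (by omega) (by omega) (by omega) (by omega))
        (modne m (2 + 1) 0 (by omega) (by omega) (by omega) (by omega))
      have c24 := hmx 2 4 (by omega) (by omega) (by omega)
        (modne m (2 + 1) 4 (by omega) (by omega) (by omega) (by omega))
        (modne m (4 + 1) 2 (by omega) (by omega) (by omega) (by omega))
      have c41 := hmx 4 1 (by omega) (by omega) (by omega)
        (modne m (4 + 1) 1 (by omega) (by omega) (by omega) (by omega))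
        (modne m (1 + 1) 4 (by omega) (by omega) (by omega) (by omega))
      have c13 := hmx 1 3 (by omega) (by omega) (by omega)
        (modne m (1 + 1) 3 (by omega) (by omega) (by omega) (by omega))
        (modne m (3 + 1) 1 (by omega) (by omega) (by omega) (by omega))
      have c30 := hmx 3 0 (by omega) (by omega) (by omega)
        (modne m (3 + 1) 0 (by omega) (by omega) (by omega) (by omega))
        (modne m (0 + 1) 3 (by omega) (by omega) (by omega) (by omega))
      rcases c02 with ⟨x1, y1⟩ | ⟨x1, y1⟩ <;>
        rcases c24 with ⟨x2, y2⟩ | ⟨x2, y2⟩ <;>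
        rcases c41 with ⟨x3, y3⟩ | ⟨x3, y3⟩ <;>
        rcases c13 with ⟨x4, y4⟩ | ⟨x4, y4⟩ <;>
        rcases c30 with ⟨x5, y5⟩ | ⟨x5, y5⟩ <;> omega
  · -- CASE I : v1 is large (v1 ≥ n - r + 3)
    push_neg at hsplit
    have hbig2 : ∀ t, t < m → ew.1 ≤ a t → v1 - (ew.2 - ew.1) + 1 ≤ a t := by
      intro t ht hb
      by_contra hq
      push_neg at hq
      exact (hmemA t ht).2.2 (adjGraph_def.mpr
        (Or.inl ⟨by omega, ew, hewE, hb, by omega, hewtop⟩))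
    -- token minimization
    have hbdd : ∀ z : ℤ, (∃ t, t < m ∧
        ((a t < ew.1 ∧ ∃ e, e ∈ E ∧ e.1 ≤ a t ∧ z = a t + e.2 - e.1) ∨
         (ew.1 ≤ a t ∧ ∃ e, e ∈ E ∧ a t - n + r ≤ e.2 ∧ z = e.1))) → 1 ≤ z := by
      rintro z ⟨t, ht, ⟨-, e, heE, h1', h2'⟩ | ⟨-, e, heE, h1', h2'⟩⟩
      · obtain ⟨g1, g2, g3⟩ := hEr e heE
        have := (hS _ (hmemA t ht).1).1
        omega
      · obtain ⟨g1, g2, g3⟩ := hEr e heE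
        omega
    have hinh : ∃ z : ℤ, ∃ t, t < m ∧
        ((a t < ew.1 ∧ ∃ e, e ∈ E ∧ e.1 ≤ a t ∧ z = a t + e.2 - e.1) ∨
         (ew.1 ≤ a t ∧ ∃ e, e ∈ E ∧ a t - n + r ≤ e.2 ∧ z = e.1)) := by
      have h02 := (hadjS 0 (by omega) 2 (by omega) (by omega)
        (modne m (0 + 1) 2 (by omega) (by omega) (by omega) (by omega))
        (modne m (2 + 1) 0 (by omega) (by omega) (by omega) (by omega))).2.2
      rcases adjGraph_def.mp h02 with ⟨hlt2, e, heE, f1, f2, f3⟩ |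
        ⟨hlt2, e, heE, f1, f2, f3⟩
      · have hs0 := hsmallend 0 2 (by omega) (by omega) hlt2
          (adjGraph_def.mpr (Or.inl ⟨hlt2, e, heE, f1, f2, f3⟩))
        exact ⟨a 0 + e.2 - e.1, 0, by omega, Or.inl ⟨hs0, e, heE, f1, rfl⟩⟩
      · have hs2 := hsmallend 2 0 (by omega) (by omega) hlt2
          (adjGraph_def.mpr (Or.inl ⟨hlt2, e, heE, f1, f2, f3⟩))
        exact ⟨a 2 + e.2 - e.1, 2, by omega, Or.inl ⟨hs2, e, heE, f1, rfl⟩⟩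
    obtain ⟨R, hRP, hRmin⟩ := Int.exists_least_of_bdd ⟨1, hbdd⟩ hinh
    have hbigP : ∀ t, t < m → ew.1 ≤ a t → ∀ e, e ∈ E → e.1 ≤ R - 1 →
        e.2 < a t - n + r := by
      intro t ht hb e heE he1
      by_contra hq
      push_neg at hq
      have := hRmin e.1 ⟨t, ht, Or.inr ⟨hb, e, heE, hq, rfl⟩⟩
      omega
    obtain ⟨t0, ht0, hmin⟩ := hRP
    have hm1 : 0 < m := by omega
    have n1 := natmod (t0 + (m - 1)) m hm1 (by omega)
    have n2 := natmod (t0 + 1) m hm1 (by omega)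
    have n3 := natmod (t0 + 2) m hm1 (by omega)
    have hs1m : (t0 + (m - 1)) % m < m := Nat.mod_lt _ hm1
    have hs2m : (t0 + 1) % m < m := Nat.mod_lt _ hm1
    have hs1succ : ((t0 + (m - 1)) % m + 1) % m = t0 := by
      have e1 : t0 + (m - 1) + 1 = t0 + m := by omega
      rw [Nat.mod_add_mod, e1, Nat.add_mod_right, Nat.mod_eq_of_lt ht0]
    have hs1net0 : (t0 + (m - 1)) % m ≠ t0 := by
      rcases n1 with ⟨h', h''⟩ | ⟨h', h''⟩ <;> rw [h'] <;> omega
    have hs2net0 : (t0 + 1) % m ≠ t0 := by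
      rcases n2 with ⟨h', h''⟩ | ⟨h', h''⟩ <;> rw [h'] <;> omega
    have hc1 : (t0 + (m - 1)) % m ≠ (t0 + 1) % m := by
      rcases n1 with ⟨h', h''⟩ | ⟨h', h''⟩ <;> rcases n2 with ⟨k', k''⟩ | ⟨k', k''⟩ <;>
        rw [h', k'] <;> omega
    have hcc : ((t0 + 1) % m + 1) % m ≠ (t0 + (m - 1)) % m := by
      have e2 : t0 + 1 + 1 = t0 + 2 := by omega
      rw [Nat.mod_add_mod, e2]
      rcases n3 with ⟨h', h''⟩ | ⟨h', h''⟩ <;> rcases n1 with ⟨k', k''⟩ | ⟨k', k''⟩ <;>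
        rw [h', k'] <;> omega
    have hnb1 : ¬ adjGraph r n E (a ((t0 + (m - 1)) % m)) (a t0) := by
      have hh := hnon ((t0 + (m - 1)) % m) hs1m
      rw [hs1succ] at hh
      exact hh
    have hnb2 : ¬ adjGraph r n E (a t0) (a ((t0 + 1) % m)) := hnon t0 ht0
    have hnb2' : ¬ adjGraph r n E (a ((t0 + 1) % m)) (a t0) := hsym _ _ hnb2
    have hnb1' : ¬ adjGraph r n E (a t0) (a ((t0 + (m - 1)) % m)) := hsym _ _ hnb1
    have hadj12 : adjGraph r n E (a ((t0 + (m - 1)) % m)) (a ((t0 + 1) % m)) :=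
      (hadjS _ hs1m _ hs2m hc1 (by rw [hs1succ]; exact Ne.symm hs2net0) hcc).2.2
    -- the small neighbours of the minimizer are < R
    have hPnb : ∀ u, u < m → ¬ adjGraph r n E (a u) (a t0) → a u ≠ a t0 →
        a u < ew.1 → a u < R := by
      intro u hu hnadj hneq hsm
      rcases hmin with ⟨hxs, e0, he0E, he01, hReq⟩ | ⟨hxb, e1, he1E, he12, hReq⟩
      · obtain ⟨g1, g2, g3⟩ := hEr e0 he0E
        rcases lt_or_gt_of_ne hneq with hlt' | hlt'
        · omega
        · by_contra hq
          push_neg at hq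
          exact hnadj (adjGraph_def.mpr
            (Or.inr ⟨hlt', e0, he0E, he01, by omega, by omega⟩))
      · obtain ⟨g1, g2, g3⟩ := hEr e1 he1E
        have hxB := hbig2 t0 ht0 hxb
        by_contra hq
        push_neg at hq
        exact hnadj (adjGraph_def.mpr
          (Or.inl ⟨by omega, e1, he1E, by omega, by omega, by omega⟩))
    -- finish : the two neighbours of the minimizer must form a chord
    rcases adjGraph_def.mp hadj12 with ⟨hlt2, e2, he2E, f1, f2, f3⟩ |
      ⟨hlt2, e2, he2E, f1, f2, f3⟩
    · obtain ⟨g1, g2, g3⟩ := hEr e2 he2E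
      rcases lt_or_ge (a ((t0 + (m - 1)) % m)) ew.1 with hy | hy <;>
        rcases lt_or_ge (a ((t0 + 1) % m)) ew.1 with hz | hz
      · -- both small
        have hzR := hPnb _ hs2m hnb2' (hinj _ hs2m _ ht0 hs2net0) hz
        have := hRmin (a ((t0 + (m - 1)) % m) + e2.2 - e2.1)
          ⟨(t0 + (m - 1)) % m, hs1m, Or.inl ⟨hy, e2, he2E, f1, rfl⟩⟩
        omega
      · -- small, big
        have hyR := hPnb _ hs1m hnb1 (hinj _ hs1m _ ht0 hs1net0) hy
        have hbp := hbigP _ hs2m hz e2 he2E (by omega)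
        omega
      · -- big, small : impossible orientation
        have hb1 := hbig2 _ hs1m hy
        omega
      · -- both big
        have hb1 := hbig2 _ hs1m hy
        have := hu1max (a ((t0 + (m - 1)) % m)) (hmemA _ hs1m).1
          ⟨a ((t0 + 1) % m), (hmemA _ hs2m).1, hlt2,
            adjGraph_def.mpr (Or.inl ⟨hlt2, e2, he2E, f1, f2, f3⟩)⟩
        omega
    · obtain ⟨g1, g2, g3⟩ := hEr e2 he2E
      rcases lt_or_ge (a ((t0 + 1) % m)) ew.1 with hy | hy <;>
        rcases lt_or_ge (a ((t0 + (m - 1)) % m)) ew.1 with hz | hz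
      · -- both small
        have hzR := hPnb _ hs1m hnb1 (hinj _ hs1m _ ht0 hs1net0) hz
        have := hRmin (a ((t0 + 1) % m) + e2.2 - e2.1)
          ⟨(t0 + 1) % m, hs2m, Or.inl ⟨hy, e2, he2E, f1, rfl⟩⟩
        omega
      · -- small, big
        have hyR := hPnb _ hs2m hnb2' (hinj _ hs2m _ ht0 hs2net0) hy
        have hbp := hbigP _ hs1m hz e2 he2E (by omega)
        omega
      · -- big, small : impossible orientation
        have hb1 := hbig2 _ hs2m hy
        omega
      · -- both big
        have hb1 := hbig2 _ hs2m hy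
        have := hu1max (a ((t0 + 1) % m)) (hmemA _ hs2m).1
          ⟨a ((t0 + (m - 1)) % m), (hmemA _ hs1m).1, hlt2,
            adjGraph_def.mpr (Or.inl ⟨hlt2, e2, he2E, f1, f2, f3⟩)⟩
        omega
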